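/- Every finite semilattice indecomposable semigroup S that contains a subsemilattice of cardinality 2⌊(|S|−1)/4⌋ + 1 and satisfies |S| ≡ 1 (mod 4) has a zero element. -/

import Mathlib

universe u

/-- A semigroup is semilattice indecomposable if every semigroup homomorphism from it to a
semilattice (a commutative idempotent semigroup) is constant. -/
def SemilatticeIndecomposable (S : Type u) [Semigroup S] : Prop :=
  ∀ (T : Type u) [Semigroup T],
    (∀ a b : T, a * b = b * a) → (∀ a : T, a * a = a) →
      ∀ f : S →ₙ* T, ∀ x y : S, f x = f y

/-- A subsemilattice of a semigroup: a subsemigroup consisting of pairwise commuting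
idempotents. -/
def IsSubsemilattice {S : Type u} [Mul S] (Y : Set S) : Prop :=
  (∀ a ∈ Y, ∀ b ∈ Y, a * b ∈ Y) ∧ (∀ a ∈ Y, a * a = a) ∧
    (∀ a ∈ Y, ∀ b ∈ Y, a * b = b * a)

/-!
For `y` in a set `Y` of commuting idempotents, `{u | y * u = y}` is a completely prime filter
(`a * b` lies in it iff `a` and `b` do) unless some `r ∉ Y` is 𝓡-related to `y`, i.e.
`y * r = r` and `r * s = y` for some `s`. The indicator of such a filter is a homomorphism onto the
two-element semilattice, so by indecomposability the filter is all of `S`: `y` is a left zero.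
Distinct commuting idempotents are never 𝓡-related, so if no element of `Y` is a left zero then
`|Y| ≤ |S \ Y|`. Hence if `Y` holds more than half of `S`, some `y ∈ Y` is a left zero, dually some
`y' ∈ Y` is a right zero, and `y = y * y' = y'` is a zero. For `|S| = 4k + 1`, `|Y| = 2k + 1`.
-/
theorem SemilatticeIndecomposable.eq_univ_of_mul_mem_iff {S : Type u} [Semigroup S]
    (hS : SemilatticeIndecomposable S) {F : Set S} (hne : F.Nonempty)
    (hF : ∀ a b : S, a * b ∈ F ↔ a ∈ F ∧ b ∈ F) : F = Set.univ := by
  classical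
  obtain ⟨w, hw⟩ := hne
  let f : S →ₙ* ULift.{u} Bool :=
    ⟨fun x => ULift.up (decide (x ∈ F)), fun a b => by
      ext1; simp only [hF, ULift.mul_down, Bool.mul_eq_and, Bool.decide_and]⟩
  refine Set.eq_univ_of_forall fun x => ?_
  have hfx := congrArg ULift.down
    (hS _ mul_comm (fun a => ULift.ext _ _ (Bool.and_self a.down)) f x w)
  simpa [f, hw] using hfx

theorem SemilatticeIndecomposable.op {S : Type u} [Semigroup S]
    (hS : SemilatticeIndecomposable S) : SemilatticeIndecomposable Sᵐᵒᵖ := by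
  intro T _ hcomm hidem f x y
  let g : S →ₙ* T := ⟨fun s => f (MulOpposite.op s), fun a b => by
    simp only [MulOpposite.op_mul, map_mul, hcomm]⟩
  exact hS T hcomm hidem g x.unop y.unop

section CommutingIdempotents

variable {S : Type u} [Semigroup S] {Y : Set S}
  (hYi : ∀ a ∈ Y, a * a = a) (hYc : ∀ a ∈ Y, ∀ b ∈ Y, a * b = b * a)
include hYi hYc

theorem exists_rRelated_notMem_of_not_leftZero (hS : SemilatticeIndecomposable S) {y : S}
    (hy : y ∈ Y) (hy₀ : ∃ u, y * u ≠ y) : ∃ r ∉ Y, y * r = r ∧ ∃ s, r * s = y := by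
  by_contra! hno
  suffices {u | y * u = y} = Set.univ by
    obtain ⟨u, hu⟩ := hy₀
    exact hu (Set.eq_univ_iff_forall.mp this u)
  refine hS.eq_univ_of_mul_mem_iff ⟨y, hYi y hy⟩ fun a b => ⟨fun hab => ?_, fun ⟨ha, hb⟩ => ?_⟩
  · have hyab : y * a * b = y := by rw [mul_assoc]; exact hab
    have hy_ya : y * (y * a) = y * a := by rw [← mul_assoc, hYi y hy]
    by_cases hya : y * a ∈ Y
    · -- `y * a ≤ y` and `y ≤ y * a` in the natural order of the idempotents of `Y`
      have hya_y : y * a * y = y :=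
        calc y * a * y = y * a * (y * a * b) := by rw [hyab]
          _ = y * a * b := by rw [← mul_assoc, hYi _ hya]
          _ = y := hyab
      have hya_eq : y * a = y := by rw [← hy_ya, hYc y hy _ hya, hya_y]
      exact ⟨hya_eq, by simpa only [Set.mem_ofPred_eq, hya_eq] using hyab⟩
    · exact absurd hyab (hno _ hya hy_ya b)
  · change y * (a * b) = y
    rw [← mul_assoc, ha, hb]

theorem ncard_le_ncard_compl_of_forall_not_leftZero [Finite S]
    (hS : SemilatticeIndecomposable S) (hY : ∀ y ∈ Y, ∃ u, y * u ≠ y) :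
    Y.ncard ≤ Yᶜ.ncard := by
  choose! r hrY hyr s hrs using
    fun y hy => exists_rRelated_notMem_of_not_leftZero hYi hYc hS hy (hY y hy)
  refine Set.ncard_le_ncard_of_injOn r hrY (fun y hy z hz hr => ?_)
  have hyz : y * z = z := by rw [← hrs z hz, ← hr, ← mul_assoc, hyr y hy]
  have hzy : z * y = y := by rw [← hrs y hy, hr, ← mul_assoc, hyr z hz]
  rw [← hzy, ← hYc y hy z hz, hyz]

theorem exists_leftZero_mem_of_ncard_compl_lt [Finite S] (hS : SemilatticeIndecomposable S)
    (hY : Yᶜ.ncard < Y.ncard) : ∃ y ∈ Y, ∀ u, y * u = y := by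
  by_contra! h
  exact (ncard_le_ncard_compl_of_forall_not_leftZero hYi hYc hS h).not_gt hY

theorem exists_rightZero_mem_of_ncard_compl_lt [Finite S] (hS : SemilatticeIndecomposable S)
    (hY : Yᶜ.ncard < Y.ncard) : ∃ y ∈ Y, ∀ u, u * y = y := by
  have : Finite Sᵐᵒᵖ := Finite.of_equiv S MulOpposite.opEquiv
  have hncard (A : Set S) : (MulOpposite.unop ⁻¹' A).ncard = A.ncard :=
    Set.ncard_preimage_of_injective_subset_range MulOpposite.unop_injective
      (MulOpposite.unop_surjective.range_eq ▸ Set.subset_univ A)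
  obtain ⟨y, hy, hy_zero⟩ := exists_leftZero_mem_of_ncard_compl_lt (Y := MulOpposite.unop ⁻¹' Y)
    (fun a ha => congrArg MulOpposite.op (hYi _ ha))
    (fun a ha b hb => congrArg MulOpposite.op (hYc _ hb _ ha))
    hS.op (by rwa [← Set.preimage_compl, hncard, hncard])
  exact ⟨y.unop, hy, fun u => congrArg MulOpposite.unop (hy_zero (MulOpposite.op u))⟩

theorem exists_zero_of_ncard_compl_lt [Finite S] (hS : SemilatticeIndecomposable S)
    (hY : Yᶜ.ncard < Y.ncard) : ∃ z : S, ∀ x : S, z * x = z ∧ x * z = z := by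
  obtain ⟨y, -, hy⟩ := exists_leftZero_mem_of_ncard_compl_lt hYi hYc hS hY
  obtain ⟨y', -, hy'⟩ := exists_rightZero_mem_of_ncard_compl_lt hYi hYc hS hY
  have hyy' : y = y' := by rw [← hy y', hy']
  exact ⟨y, fun x => ⟨hy x, hyy' ▸ hy' x⟩⟩

end CommutingIdempotents

/-- A finite semilattice indecomposable semigroup `S` with `|S| ≡ 1 (mod 4)` containing a
subsemilattice of cardinality `2⌊(|S|-1)/4⌋ + 1` has a zero element. -/
theorem stmt_18 {S : Type u} [Semigroup S] [Fintype S]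
    (hS : SemilatticeIndecomposable S)
    (hmod : Fintype.card S % 4 = 1)
    (Y : Set S) (hY : IsSubsemilattice Y)
    (hcard : Y.ncard = 2 * ((Fintype.card S - 1) / 4) + 1) :
    ∃ z : S, ∀ x : S, z * x = z ∧ x * z = z := by
  have hsum : Y.ncard + Yᶜ.ncard = Fintype.card S := by
    rw [Set.ncard_add_ncard_compl, Nat.card_eq_fintype_card]
  exact exists_zero_of_ncard_compl_lt hY.2.1 hY.2.2 hS (by omega)
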